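/- Let h be a measure function, E ⊆ 𝕋 measurable, and I an arc of 𝕋. If C is a measurable subset of I that is almost contained in E, then M⁰_h(I \ C) = M⁰_h(I \ (C ∩ core_h(E))). -/

import Mathlib

open MeasureTheory Set Filter Topology
open scoped ENNReal

noncomputable section

/-- The unit circle `𝕋` as a subset of `ℂ`. -/
def unitCircleSet : Set ℂ := Metric.sphere 0 1

/-- The normalized arclength (Lebesgue) measure `m` on the unit circle `𝕋`,
viewed as a Borel measure on `ℂ`, normalized so that `m(𝕋) = 1`. -/
def mC : Measure ℂ :=
  (ENNReal.ofReal (2 * Real.pi))⁻¹ •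
    Measure.map (circleMap 0 1) (volume.restrict (Set.Ioc 0 (2 * Real.pi)))

/-- An open arc of the unit circle. -/
def IsOpenArc (A : Set ℂ) : Prop :=
  ∃ a b : ℝ, a < b ∧ b - a ≤ 2 * Real.pi ∧ A = circleMap 0 1 '' Set.Ioo a b

/-- A closed arc of the unit circle. -/
def IsClosedArc (A : Set ℂ) : Prop :=
  ∃ a b : ℝ, a < b ∧ b - a ≤ 2 * Real.pi ∧ A = circleMap 0 1 '' Set.Icc a b

/-- The dyadic arcs `d_{n,j} = { e^{it} : t ∈ [2π 2⁻ⁿ j, 2π 2⁻ⁿ (j+1)] }`. -/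
def IsDyadicArc (A : Set ℂ) : Prop :=
  ∃ n j : ℕ, j < 2 ^ n ∧
    A = circleMap 0 1 ''
      Set.Icc (2 * Real.pi * j / 2 ^ n) (2 * Real.pi * (j + 1) / 2 ^ n)

/-- A measure function: an increasing continuous function `h` with `h 0 = 0`, such that
`t ↦ h t / t` is decreasing and tends to `+∞` as `t → 0⁺`. -/
structure IsMeasureFunction (h : ℝ → ℝ) : Prop where
  continuousOn : ContinuousOn h (Set.Ici 0)
  monotoneOn : MonotoneOn h (Set.Ici 0)
  map_zero : h 0 = 0
  antitoneOn : AntitoneOn (fun t => h t / t) (Set.Ioi 0)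
  tendsto_atTop : Filter.Tendsto (fun t => h t / t) (nhdsWithin 0 (Set.Ioi 0)) Filter.atTop

/-- The Hausdorff content `M_h(E)`: the infimum of `Σ_{ℓ ∈ L} h(|ℓ|)` over countable
covers `L` of `E` by open arcs of the circle. -/
def hausdorffContent (h : ℝ → ℝ) (E : Set ℂ) : ℝ≥0∞ :=
  ⨅ (L : Set (Set ℂ)) (_ : L.Countable) (_ : ∀ ℓ ∈ L, IsOpenArc ℓ)
    (_ : E ⊆ ⋃₀ L), ∑' ℓ : L, ENNReal.ofReal (h (mC ↑ℓ).toReal)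

/-- The dyadic Hausdorff content `M_{h,d}(E)`: as `M_h(E)` but with covers by dyadic arcs. -/
def dyadicContent (h : ℝ → ℝ) (E : Set ℂ) : ℝ≥0∞ :=
  ⨅ (L : Set (Set ℂ)) (_ : L.Countable) (_ : ∀ d ∈ L, IsDyadicArc d)
    (_ : E ⊆ ⋃₀ L), ∑' d : L, ENNReal.ofReal (h (mC ↑d).toReal)

/-- The small Hausdorff content `M⁰_h(E)`: as `M_h(E)`, but the cover is only required
to cover `E` up to a set of Lebesgue measure zero. -/
def hausdorffContent0 (h : ℝ → ℝ) (E : Set ℂ) : ℝ≥0∞ :=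
  ⨅ (L : Set (Set ℂ)) (_ : L.Countable) (_ : ∀ ℓ ∈ L, IsOpenArc ℓ)
    (_ : mC (E \ ⋃₀ L) = 0), ∑' ℓ : L, ENNReal.ofReal (h (mC ↑ℓ).toReal)

/-- The small dyadic Hausdorff content `M⁰_{h,d}(E)`. -/
def dyadicContent0 (h : ℝ → ℝ) (E : Set ℂ) : ℝ≥0∞ :=
  ⨅ (L : Set (Set ℂ)) (_ : L.Countable) (_ : ∀ d ∈ L, IsDyadicArc d)
    (_ : mC (E \ ⋃₀ L) = 0), ∑' d : L, ENNReal.ofReal (h (mC ↑d).toReal)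

/-- An `h`-Carleson set: a closed subset `A` of the circle whose complement `𝕋 \ A`
is a countable union `⋃ L` of open arcs with `Σ_{ℓ ∈ L} h(|ℓ|) < ∞`.  (For nonempty `A`
this is equivalent to the usual definition via the decomposition of `𝕋 \ A` into its
connected components, i.e. into countably many pairwise disjoint open arcs, by
subadditivity of `h`.) -/
def IsHCarleson (h : ℝ → ℝ) (A : Set ℂ) : Prop :=
  A ⊆ unitCircleSet ∧ IsClosed A ∧
    ∃ L : Set (Set ℂ), L.Countable ∧ (∀ ℓ ∈ L, IsOpenArc ℓ) ∧
      unitCircleSet \ A = ⋃₀ L ∧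
      ∑' ℓ : L, ENNReal.ofReal (h (mC ↑ℓ).toReal) ≠ ⊤

/-- `(core, res)` is a core-residual decomposition of `E` with respect to `h`:
`core` and `res` are disjoint measurable sets with `E = (res ∪ core) \ N` for some
Lebesgue-null set `N`; every `h`-Carleson set almost contained in `E` is almost
contained in `core`; and `core` is, up to a null set, a countable union of
`h`-Carleson sets almost contained in `E`. -/
def IsCoreResidualDecomp (h : ℝ → ℝ) (E core res : Set ℂ) : Prop :=
  MeasurableSet core ∧ MeasurableSet res ∧ Disjoint core res ∧
    (∃ N : Set ℂ, mC N = 0 ∧ E = (res ∪ core) \ N) ∧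
    (∀ A : Set ℂ, IsHCarleson h A → mC (A \ E) = 0 → mC (A \ core) = 0) ∧
    (∃ G : ℕ → Set ℂ, (∀ n, IsHCarleson h (G n) ∧ mC (G n \ E) = 0) ∧
      mC ((core \ ⋃ n, G n) ∪ ((⋃ n, G n) \ core)) = 0)

/-- The measure function `h(t) = t log(e/t)` defining Beurling-Carleson sets. -/
def hBC : ℝ → ℝ := fun t => t * Real.log (Real.exp 1 / t)

/-- A Beurling-Carleson set. -/
def IsBeurlingCarleson (A : Set ℂ) : Prop := IsHCarleson hBC A

/-! Given a cover `L` of `I \ C` by arcs with finite `h`-cost, add the arc complementary to `I`: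
what is left uncovered on the circle is an `h`-Carleson set `A`. Up to a null set `A` lies in `C`,
hence in `E`, hence in `core`. Every point of `I ∩ C` missed by `L` lies in `A`, so `L` also covers
`I \ (C ∩ core)` up to a null set, and `M⁰_h(I \ (C ∩ core)) ≤ M⁰_h(I \ C)`. The other inequality
is monotonicity of `M⁰_h`. -/

open Real

theorem unitCircleSet_eq_range_circleMap : unitCircleSet = range (circleMap 0 1) := by
  rw [range_circleMap, abs_one]
  rfl

theorem unitCircleSet_eq_image_Ioc (a : ℝ) :
    unitCircleSet = circleMap 0 1 '' Ioc a (a + 2 * π) := by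
  rw [(periodic_circleMap 0 1).image_Ioc two_pi_pos, unitCircleSet_eq_range_circleMap]

theorem IsOpenArc.subset_unitCircleSet {ℓ : Set ℂ} (hℓ : IsOpenArc ℓ) : ℓ ⊆ unitCircleSet := by
  obtain ⟨a, b, -, -, rfl⟩ := hℓ
  rw [unitCircleSet_eq_range_circleMap]
  exact image_subset_range _ _

theorem unitCircleSet_diff_image_Ioo (a b : ℝ) :
    unitCircleSet \ circleMap 0 1 '' Ioo a b = circleMap 0 1 '' Icc b (a + 2 * π) := by
  apply Subset.antisymm
  · rintro z ⟨hz, hzI⟩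
    rw [unitCircleSet_eq_image_Ioc a] at hz
    obtain ⟨θ, hθ, rfl⟩ := hz
    exact ⟨θ, ⟨not_lt.1 fun hθb => hzI ⟨θ, ⟨hθ.1, hθb⟩, rfl⟩, hθ.2⟩, rfl⟩
  · rintro _ ⟨θ, hθ, rfl⟩
    refine ⟨(unitCircleSet_eq_range_circleMap ▸ mem_range_self θ), ?_⟩
    rintro ⟨τ, hτ, hτθ⟩
    have hdist : |τ - θ| < 2 * π := by
      rw [abs_lt]
      constructor <;> linarith [hτ.1, hτ.2, hθ.1, hθ.2]
    linarith [eq_of_circleMap_eq one_ne_zero hdist hτθ, hτ.2, hθ.1]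

theorem IsOpenArc.isClosed_unitCircleSet_diff {ℓ : Set ℂ} (hℓ : IsOpenArc ℓ) :
    IsClosed (unitCircleSet \ ℓ) := by
  obtain ⟨a, b, -, -, rfl⟩ := hℓ
  rw [unitCircleSet_diff_image_Ioo]
  exact (isCompact_Icc.image (continuous_circleMap 0 1)).isClosed

theorem isClosed_unitCircleSet_diff_sUnion {L : Set (Set ℂ)} (hL : ∀ ℓ ∈ L, IsOpenArc ℓ) :
    IsClosed (unitCircleSet \ ⋃₀ L) := by
  have hdiff : unitCircleSet \ ⋃₀ L = unitCircleSet ∩ ⋂ ℓ ∈ L, unitCircleSet \ ℓ := by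
    ext
    simp only [Set.mem_sdiff, mem_sUnion, mem_inter_iff, mem_iInter, not_exists, not_and]
    grind
  rw [hdiff]
  exact Metric.isClosed_sphere.inter
    (isClosed_biInter fun ℓ hℓ => (hL ℓ hℓ).isClosed_unitCircleSet_diff)

theorem Set.Countable.mC_eq_zero {s : Set ℂ} (hs : s.Countable) : mC s = 0 := by
  rw [mC, Measure.smul_apply, Measure.map_apply (measurable_circleMap 0 1) hs.measurableSet,
    Measure.restrict_apply' measurableSet_Ioc,
    measure_mono_null inter_subset_left
      ((hs.preimage_circleMap 0 one_ne_zero).measure_zero _), smul_zero]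

theorem IsOpenArc.exists_finite_arcs_disjoint_ae_cover {I : Set ℂ} (hI : IsOpenArc I) :
    ∃ K : Set (Set ℂ), K.Finite ∧ (∀ ℓ ∈ K, IsOpenArc ℓ) ∧ Disjoint I (⋃₀ K) ∧
      mC (unitCircleSet \ (I ∪ ⋃₀ K)) = 0 := by
  obtain ⟨a, b, hab, hba, rfl⟩ := hI
  set J := circleMap 0 1 '' Ioo b (a + 2 * π)
  have hdisj : Disjoint (circleMap 0 1 '' Ioo a b) J := by
    refine (disjoint_sdiff_right (t := unitCircleSet)).mono_right ?_
    rw [unitCircleSet_diff_image_Ioo]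
    exact image_mono Ioo_subset_Icc_self
  have hnull : mC (unitCircleSet \ (circleMap 0 1 '' Ioo a b ∪ J)) = 0 := by
    refine measure_mono_null (t := circleMap 0 1 '' {b, a + 2 * π}) ?_
      ((toFinite _).image _).countable.mC_eq_zero
    rw [← sdiff_sdiff, unitCircleSet_diff_image_Ioo]
    rintro _ ⟨⟨θ, hθ, rfl⟩, hθJ⟩
    refine mem_image_of_mem _ ?_
    rw [← Icc_sdiff_Ioo_same (by linarith)]
    exact ⟨hθ, fun hθ' => hθJ (mem_image_of_mem _ hθ')⟩
  by_cases hb : b < a + 2 * π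
  · refine ⟨{J}, finite_singleton J, ?_, by rwa [sUnion_singleton], by rwa [sUnion_singleton]⟩
    rintro ℓ rfl
    exact ⟨b, a + 2 * π, hb, by linarith, rfl⟩
  · have hJ : J = ∅ := by simp [J, Ioo_eq_empty hb]
    refine ⟨∅, finite_empty, fun ℓ hℓ => hℓ.elim, by simp, ?_⟩
    rwa [sUnion_empty, ← hJ]

theorem tsum_union_ne_top_of_finite {α : Type*} {f : α → ℝ≥0∞} (hf : ∀ a, f a ≠ ∞)
    {K L : Set α} (hK : K.Finite) (hL : ∑' a : L, f a ≠ ∞) : ∑' a : ↑(K ∪ L), f a ≠ ∞ := by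
  have hK' : ∑' a : K, f a ≠ ∞ := by
    have := hK.fintype
    rw [tsum_fintype]
    exact ENNReal.sum_ne_top.2 fun a _ => hf a
  exact ne_top_of_le_ne_top (ENNReal.add_ne_top.2 ⟨hK', hL⟩) (ENNReal.tsum_union_le f K L)

theorem isHCarleson_unitCircleSet_diff_sUnion (h : ℝ → ℝ) {L : Set (Set ℂ)} (hLc : L.Countable)
    (hL : ∀ ℓ ∈ L, IsOpenArc ℓ)
    (hfin : ∑' ℓ : L, ENNReal.ofReal (h (mC ↑ℓ).toReal) ≠ ∞) :
    IsHCarleson h (unitCircleSet \ ⋃₀ L) :=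
  ⟨sdiff_subset, isClosed_unitCircleSet_diff_sUnion hL, L, hLc, hL,
    sdiff_sdiff_cancel_left (sUnion_subset fun ℓ hℓ => (hL ℓ hℓ).subset_unitCircleSet), hfin⟩

theorem hausdorffContent0_le_of_forall_cover (h : ℝ → ℝ) {X Y : Set ℂ}
    (H : ∀ L : Set (Set ℂ), L.Countable → (∀ ℓ ∈ L, IsOpenArc ℓ) →
      ∑' ℓ : L, ENNReal.ofReal (h (mC ↑ℓ).toReal) ≠ ∞ →
      mC (X \ ⋃₀ L) = 0 → mC (Y \ ⋃₀ L) = 0) :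
    hausdorffContent0 h Y ≤ hausdorffContent0 h X := by
  refine le_iInf₂ fun L hLc => le_iInf₂ fun hL hcov => ?_
  by_cases hfin : ∑' ℓ : L, ENNReal.ofReal (h (mC ↑ℓ).toReal) = ∞
  · exact hfin ▸ le_top
  · exact iInf₂_le_of_le L hLc (iInf₂_le_of_le hL (H L hLc hL hfin hcov) le_rfl)

theorem hausdorffContent0_mono (h : ℝ → ℝ) {X Y : Set ℂ} (hXY : X ⊆ Y) :
    hausdorffContent0 h X ≤ hausdorffContent0 h Y :=
  hausdorffContent0_le_of_forall_cover h fun _ _ _ _ hcov =>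
    measure_mono_null (sdiff_subset_sdiff_left hXY) hcov

theorem mC_diff_inter_diff_sUnion_eq_zero {h : ℝ → ℝ} {E core I C : Set ℂ} {L : Set (Set ℂ)}
    (hcore : ∀ A, IsHCarleson h A → mC (A \ E) = 0 → mC (A \ core) = 0)
    (hI : IsOpenArc I) (hCE : mC (C \ E) = 0) (hLc : L.Countable) (hL : ∀ ℓ ∈ L, IsOpenArc ℓ)
    (hfin : ∑' ℓ : L, ENNReal.ofReal (h (mC ↑ℓ).toReal) ≠ ∞)
    (hcov : mC ((I \ C) \ ⋃₀ L) = 0) :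
    mC ((I \ (C ∩ core)) \ ⋃₀ L) = 0 := by
  obtain ⟨K, hKfin, hK, hIK, hKnull⟩ := hI.exists_finite_arcs_disjoint_ae_cover
  set A := unitCircleSet \ ⋃₀ (K ∪ L)
  have hA : IsHCarleson h A :=
    isHCarleson_unitCircleSet_diff_sUnion h (hKfin.countable.union hLc)
      (fun ℓ hℓ => hℓ.elim (hK ℓ) (hL ℓ))
      (tsum_union_ne_top_of_finite (f := fun ℓ => ENNReal.ofReal (h (mC ℓ).toReal))
        (fun _ => ENNReal.ofReal_ne_top) hKfin hfin)
  have hAE : mC (A \ E) = 0 := by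
    refine measure_mono_null ?_ (measure_union_null (measure_union_null hKnull hcov) hCE)
    intro x
    simp only [A, sUnion_union, Set.mem_sdiff, mem_union]
    tauto
  refine measure_mono_null ?_ (measure_union_null hcov (hcore A hA hAE))
  rintro x ⟨⟨hxI, hxCcore⟩, hxL⟩
  by_cases hxC : x ∈ C
  · refine Or.inr ⟨⟨hI.subset_unitCircleSet hxI, ?_⟩, fun hx => hxCcore ⟨hxC, hx⟩⟩
    rw [sUnion_union]
    exact fun hxKL => hxKL.elim (hIK.notMem_of_mem_left hxI) hxL
  · exact Or.inl ⟨⟨hxI, hxC⟩, hxL⟩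

theorem hausdorffContent0_diff_inter_core_general
    (h : ℝ → ℝ) (E core res I C : Set ℂ) (hI : IsOpenArc I)
    (hcr : IsCoreResidualDecomp h E core res) (hCE : mC (C \ E) = 0) :
    hausdorffContent0 h (I \ C) = hausdorffContent0 h (I \ (C ∩ core)) :=
  le_antisymm (hausdorffContent0_mono h (sdiff_subset_sdiff_right inter_subset_left))
    (hausdorffContent0_le_of_forall_cover h fun _ hLc hL hfin hcov =>
      mC_diff_inter_diff_sUnion_eq_zero hcr.2.2.2.2.1 hI hCE hLc hL hfin hcov)

/-- Let `h` be a measure function, `E ⊆ 𝕋` measurable with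
core-residual decomposition `(core, res)`, and `I` an arc. If `C` is a measurable subset
of `I` almost contained in `E`, then `M⁰_h(I \ C) = M⁰_h(I \ (C ∩ core_h(E)))`. -/
theorem hausdorffContent0_diff_inter_core
    (h : ℝ → ℝ) (hh : IsMeasureFunction h) (E core res I C : Set ℂ)
    (hE : MeasurableSet E) (hEsub : E ⊆ unitCircleSet) (hI : IsOpenArc I)
    (hcr : IsCoreResidualDecomp h E core res)
    (hC : MeasurableSet C) (hCI : C ⊆ I) (hCE : mC (C \ E) = 0) :
    hausdorffContent0 h (I \ C) = hausdorffContent0 h (I \ (C ∩ core)) :=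
  hausdorffContent0_diff_inter_core_general h E core res I C hI hcr hCE
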